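/- Let X be a separable metric measure space, let 𝓑 be a Busemann–Feller basis on X, let 0 < s ≤ 1 and 1 < p < ∞, and let Cap be the M^{s,p}-capacity. Assume every u ∈ M^{s,p}(X) is locally integrable, and write u_B = μ(B)^{-1}∫_B u dμ and M_𝓑 u(x) = sup{|u|_B : x ∈ B ∈ 𝓑}. Consider the claims: (1) for every u ∈ M^{s,p}(X), Cap({x ∈ X : M_𝓑 u(x) > λ}) → 0 as λ → ∞; (2) for every λ > 0 and every sequence (u_k) in M^{s,p}(X) with ‖u_k‖_{M^{s,p}} → 0, we have Cap({x ∈ X : M_𝓑 u_k(x) > λ}) → 0 as k → ∞; (3) for every quasicontinuous u ∈ M^{s,p}(X) there exists a set E with Cap(E) = 0 such that lim_{𝓑∋B→x} u_B = u(x) for every x ∈ X∖E. Then (1) implies (2), and (2) implies (3). -/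

import Mathlib

open MeasureTheory Metric Filter Set Topology
open scoped ENNReal NNReal

/-- The `γ`-median of `f` over `A`:
`m_f^γ(A) = inf {a ∈ ℝ : μ({x ∈ A : f(x) > a}) < γ·μ(A)}`. -/
noncomputable def med {X : Type*} [MeasurableSpace X] (μ : Measure X)
    (f : X → EReal) (A : Set X) (γ : ℝ) : ℝ :=
  sInf {a : ℝ | μ {x ∈ A | (a : EReal) < f x} < ENNReal.ofReal γ * μ A}

/-- `f ∈ L⁰(X)`: `f` is measurable and finite almost everywhere. -/
def MemL0 {X : Type*} [MeasurableSpace X] (μ : Measure X) (f : X → EReal) : Prop :=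
  Measurable f ∧ ∀ᵐ x ∂μ, f x ≠ ⊤ ∧ f x ≠ ⊥

/-- A differentiation basis on a metric measure space: each `𝓑(x)` consists of bounded
measurable sets of positive measure containing `x`, with sets of arbitrarily small diameter. -/
structure IsDiffBasis {X : Type*} [MetricSpace X] [MeasurableSpace X]
    (μ : Measure X) (𝓑 : X → Set (Set X)) : Prop where
  mem_of : ∀ x B, B ∈ 𝓑 x → x ∈ B
  measurableSet : ∀ x B, B ∈ 𝓑 x → MeasurableSet B
  bounded : ∀ x B, B ∈ 𝓑 x → Bornology.IsBounded B
  pos : ∀ x B, B ∈ 𝓑 x → 0 < μ B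
  small : ∀ x, ∀ ε : ℝ, 0 < ε → ∃ B ∈ 𝓑 x, diam B < ε

/-- A Busemann–Feller basis: a differentiation basis whose members are open and such that
`x ∈ B ∈ 𝓑` implies `B ∈ 𝓑(x)`. -/
structure IsBFBasis {X : Type*} [MetricSpace X] [MeasurableSpace X]
    (μ : Measure X) (𝓑 : X → Set (Set X)) extends IsDiffBasis μ 𝓑 : Prop where
  isOpen : ∀ x B, B ∈ 𝓑 x → IsOpen B
  feller : ∀ x y B, B ∈ 𝓑 y → x ∈ B → B ∈ 𝓑 x

/-- `lim_{𝓑 ∋ B → x} F(B) = L`: the limit as `diam B → 0` over `B ∈ 𝓑(x)`. -/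
def BasisLim {X : Type*} [MetricSpace X] (𝓑 : X → Set (Set X)) (x : X)
    (F : Set X → ℝ) (L : ℝ) : Prop :=
  ∀ ε : ℝ, 0 < ε → ∃ δ : ℝ, 0 < δ ∧ ∀ B ∈ 𝓑 x, diam B < δ → |F B - L| < ε

/-- A density basis: for every measurable `A`, `lim_{𝓑∋B→x} μ(A∩B)/μ(B) = χ_A(x)` a.e. -/
def IsDensityBasis {X : Type*} [MetricSpace X] [MeasurableSpace X]
    (μ : Measure X) (𝓑 : X → Set (Set X)) : Prop :=
  ∀ A : Set X, MeasurableSet A → ∀ᵐ x ∂μ,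
    BasisLim 𝓑 x (fun B => (μ (A ∩ B) / μ B).toReal) (A.indicator (fun _ => (1 : ℝ)) x)

/-- The `γ`-median maximal function `M^γ_𝓑 f(x) = sup {m^γ_{|f|}(B) : x ∈ B ∈ 𝓑}`. -/
noncomputable def medMax {X : Type*} [MetricSpace X] [MeasurableSpace X] (μ : Measure X)
    (𝓑 : X → Set (Set X)) (f : X → EReal) (γ : ℝ) (x : X) : EReal :=
  ⨆ (B : Set X) (_ : ∃ y, B ∈ 𝓑 y) (_ : x ∈ B),
    (med μ (fun z => max (f z) (-f z)) B γ : EReal)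

/-- The `L^p`-(quasi)norm of an extended-real valued function, `0 < p < ∞`. -/
noncomputable def lpN {X : Type*} [MeasurableSpace X] (μ : Measure X) (p : ℝ)
    (f : X → EReal) : ℝ≥0∞ :=
  (∫⁻ x, (f x).abs ^ p ∂μ) ^ (1 / p)

/-- `g` is an `s`-gradient of `u`:
`|u(x) − u(y)| ≤ d(x,y)^s (g(x) + g(y))` for all `x, y` outside a null set. -/
def IsSGrad {X : Type*} [MetricSpace X] [MeasurableSpace X] (μ : Measure X) (s : ℝ)
    (u : X → ℝ) (g : X → ℝ≥0∞) : Prop :=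
  Measurable g ∧ ∃ E : Set X, μ E = 0 ∧ ∀ x ∉ E, ∀ y ∉ E,
    ENNReal.ofReal |u x - u y| ≤ ENNReal.ofReal (dist x y ^ s) * (g x + g y)

/-- The Hajłasz norm `‖u‖_{M^{s,p}} = ‖u‖_{L^p} + inf_{g ∈ D^s(u)} ‖g‖_{L^p}`. -/
noncomputable def hajNorm {X : Type*} [MetricSpace X] [MeasurableSpace X] (μ : Measure X)
    (s p : ℝ) (u : X → ℝ) : ℝ≥0∞ :=
  (∫⁻ x, ENNReal.ofReal |u x| ^ p ∂μ) ^ (1 / p) +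
    ⨅ (g : X → ℝ≥0∞) (_ : IsSGrad μ s u g), (∫⁻ x, g x ^ p ∂μ) ^ (1 / p)

/-- `u ∈ M^{s,p}(X)`: the Hajłasz space. -/
def MemHaj {X : Type*} [MetricSpace X] [MeasurableSpace X] (μ : Measure X)
    (s p : ℝ) (u : X → ℝ) : Prop :=
  Measurable u ∧ hajNorm μ s p u < ⊤

/-- The `M^{s,p}`-capacity: `Cap(E) = inf {‖u‖_{M^{s,p}}^p : u ≥ 1 on an open nbhd of E}`. -/
noncomputable def hCap {X : Type*} [MetricSpace X] [MeasurableSpace X] (μ : Measure X)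
    (s p : ℝ) (E : Set X) : ℝ≥0∞ :=
  ⨅ (u : X → ℝ) (_ : MemHaj μ s p u)
    (_ : ∃ U : Set X, IsOpen U ∧ E ⊆ U ∧ ∀ x ∈ U, 1 ≤ u x),
    hajNorm μ s p u ^ p

/-- `u` is quasicontinuous w.r.t. the `M^{s,p}`-capacity. -/
def QuasiCont {X : Type*} [MetricSpace X] [MeasurableSpace X] (μ : Measure X)
    (s p : ℝ) (u : X → ℝ) : Prop :=
  ∀ ε : ℝ, 0 < ε → ∃ F : Set X, hCap μ s p F < ENNReal.ofReal ε ∧ ContinuousOn u Fᶜ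

/-- The (basis) maximal function `M_𝓑 u(x) = sup {⨍_B |u| dμ : x ∈ B ∈ 𝓑}`. -/
noncomputable def intMax {X : Type*} [MetricSpace X] [MeasurableSpace X] (μ : Measure X)
    (𝓑 : X → Set (Set X)) (u : X → ℝ) (x : X) : ℝ≥0∞ :=
  ⨆ (B : Set X) (_ : ∃ y, B ∈ 𝓑 y) (_ : x ∈ B),
    (∫⁻ z in B, ENNReal.ofReal |u z| ∂μ) / μ B

/-!
(1) ⇒ (2): if (2) failed at some level `λ`, pick a subsequence with
`‖u_{k_j}‖ ≤ 2⁻ʲ / (j + 1)`; then `U = ∑ (j + 1) |u_{k_j}|` lies in `M^{s,p}` and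
`{M u_{k_j} > λ} ⊆ {M U > (j + 1) λ}`, so the capacities of the superlevel sets of `M U` stay
bounded below, contradicting (1).

(2) ⇒ (3): the truncations `w_k = (|u| - k)₊` tend to `0` in `M^{s,p}` and `|u| ≤ k + w_k`;
quasicontinuity gives `v_n ≥ 1` on open sets `U_n`, with `‖v_n‖ → 0` and `u` continuous off
`U_n`. Applying (2) to `h_k = |v_k| + |w_k|` along levels `1 / (q + 1)` and summing the
capacities (a Borel–Cantelli argument) yields `E` with `Cap(E) = 0` such that
`inf_k M h_k(x) = 0` for `x ∉ E`. For such `x`, `M v_k(x) < 1` forces `x ∉ U_k`, and on small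
`B ∋ x` we have `|u - u(x)| ≤ ε + C |v_k| + w_t` with `C = t + |u(x)|`, whose average over `B`
is at most `ε + C M v_k(x) + M w_t(x)`.
-/

theorem ENNReal.ofReal_abs_toReal_sub_le {A B D : ℝ≥0∞} (hA : A ≠ ⊤) (hB : B ≠ ⊤)
    (hAB : A ≤ B + D) (hBA : B ≤ A + D) : ENNReal.ofReal |A.toReal - B.toReal| ≤ D := by
  rcases le_total A B with h | h
  · rw [abs_sub_comm, ← ENNReal.toReal_sub_of_le h hB, abs_of_nonneg ENNReal.toReal_nonneg,
      ENNReal.ofReal_toReal (ENNReal.sub_ne_top hB)]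
    exact tsub_le_iff_left.2 hBA
  · rw [← ENNReal.toReal_sub_of_le h hA, abs_of_nonneg ENNReal.toReal_nonneg,
      ENNReal.ofReal_toReal (ENNReal.sub_ne_top hA)]
    exact tsub_le_iff_left.2 hAB

section LpSeminorm

variable {X : Type*} [MeasurableSpace X] {μ : Measure X} {p : ℝ}

theorem eLpNorm'_le_iff_lintegral_rpow_le {f : X → ℝ≥0∞} {C : ℝ≥0∞} (hp : 0 < p) :
    eLpNorm' f p μ ≤ C ↔ ∫⁻ x, f x ^ p ∂μ ≤ C ^ p := by
  simp only [eLpNorm', enorm_eq_self, one_div, ENNReal.rpow_inv_le_iff hp]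

theorem eLpNorm'_tsum_le {f : ℕ → X → ℝ≥0∞} (hf : ∀ n, AEMeasurable (f n) μ) (hp : 1 ≤ p) :
    eLpNorm' (fun x => ∑' n, f n x) p μ ≤ ∑' n, eLpNorm' (f n) p μ := by
  have hp0 : 0 < p := zero_lt_one.trans_le hp
  refine (eLpNorm'_le_iff_lintegral_rpow_le hp0).2 ?_
  have hlim : ∀ x, Tendsto (fun N => (∑ n ∈ Finset.range N, f n x) ^ p) atTop
      (𝓝 ((∑' n, f n x) ^ p)) := fun x =>
    (ENNReal.continuous_rpow_const.tendsto _).comp (ENNReal.tendsto_nat_tsum _)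
  calc ∫⁻ x, (∑' n, f n x) ^ p ∂μ
      = ∫⁻ x, liminf (fun N => (∑ n ∈ Finset.range N, f n x) ^ p) atTop ∂μ :=
        lintegral_congr fun x => (hlim x).liminf_eq.symm
    _ ≤ liminf (fun N => ∫⁻ x, (∑ n ∈ Finset.range N, f n x) ^ p ∂μ) atTop :=
        lintegral_liminf_le' fun N =>
          (Finset.aemeasurable_fun_sum _ fun n _ => hf n).pow_const p
    _ ≤ (∑' n, eLpNorm' (f n) p μ) ^ p := by
        refine liminf_le_of_frequently_le' (Frequently.of_forall fun N => ?_)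
        refine (eLpNorm'_le_iff_lintegral_rpow_le hp0).1 ?_
        have := eLpNorm'_sum_le (μ := μ) (s := Finset.range N)
          (fun n _ => (hf n).aestronglyMeasurable) hp
        rw [Finset.sum_fn] at this
        exact this.trans (ENNReal.sum_le_tsum _)

theorem tendsto_eLpNorm'_zero_of_dominated {F : ℕ → X → ℝ≥0∞} {bound : X → ℝ≥0∞} (hp : 0 < p)
    (hF : ∀ n, AEMeasurable (F n) μ) (hle : ∀ n, ∀ᵐ x ∂μ, F n x ≤ bound x)
    (hbound : eLpNorm' bound p μ ≠ ⊤) (hlim : ∀ᵐ x ∂μ, Tendsto (fun n => F n x) atTop (𝓝 0)) :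
    Tendsto (fun n => eLpNorm' (F n) p μ) atTop (𝓝 0) := by
  have hint : Tendsto (fun n => ∫⁻ x, F n x ^ p ∂μ) atTop (𝓝 (∫⁻ _, 0 ∂μ)) := by
    refine tendsto_lintegral_of_dominated_convergence' (fun x => bound x ^ p)
      (fun n => (hF n).pow_const p)
      (fun n => (hle n).mono fun x hx => ENNReal.rpow_le_rpow hx hp.le)
      (lintegral_rpow_enorm_lt_top_of_eLpNorm'_lt_top hp hbound.lt_top).ne
      (hlim.mono fun x hx => ?_)
    simpa [Function.comp_def, ENNReal.zero_rpow_of_pos hp] using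
      ((ENNReal.continuous_rpow_const (y := p)).tendsto 0).comp hx
  simpa [eLpNorm', Function.comp_def, ENNReal.zero_rpow_of_pos (inv_pos.2 hp)] using
    ((ENNReal.continuous_rpow_const (y := 1 / p)).tendsto _).comp hint

theorem eLpNorm'_const_mul_ennreal (hp : 0 < p) {a : ℝ≥0∞} (ha : a ≠ ⊤) (f : X → ℝ≥0∞) :
    eLpNorm' (fun x => a * f x) p μ = a * eLpNorm' f p μ := by
  simp only [eLpNorm', enorm_eq_self, ENNReal.mul_rpow_of_nonneg _ _ hp.le]
  rw [lintegral_const_mul' _ _ (ENNReal.rpow_ne_top_of_nonneg hp.le ha),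
    ENNReal.mul_rpow_of_nonneg _ _ (one_div_nonneg.2 hp.le), ← ENNReal.rpow_mul,
    mul_one_div_cancel hp.ne', ENNReal.rpow_one]

theorem eLpNorm'_add_enorm_le {u : X → ℝ} {g : X → ℝ≥0∞} (hp : 1 ≤ p) (hg : Measurable g)
    (hu : Measurable u) :
    eLpNorm' (fun x => g x + ‖u x‖ₑ) p μ ≤ eLpNorm' g p μ + eLpNorm' u p μ := by
  have := eLpNorm'_add_le (μ := μ) hg.aestronglyMeasurable hu.enorm.aestronglyMeasurable hp
  rwa [eLpNorm'_enorm] at this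

end LpSeminorm

section Average

variable {X : Type*} [MeasurableSpace X] {ν : Measure X} [IsFiniteMeasure ν] [NeZero ν]

theorem enorm_average_sub_le {f : X → ℝ} (hf : Integrable f ν) (c : ℝ) :
    ‖(⨍ z, f z ∂ν) - c‖ₑ ≤ ⨍⁻ z, ‖f z - c‖ₑ ∂ν := by
  have hsub : ⨍ z, (f z - c) ∂ν = (⨍ z, f z ∂ν) - c := by
    rw [average_eq', average_eq', integral_sub (hf.smul_measure (by simp [NeZero.ne ν]))
      (integrable_const c), integral_const, probReal_univ, one_smul]
  rw [← hsub, average_eq', laverage_eq']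
  exact enorm_integral_le_lintegral_enorm _

theorem laverage_const_add_mul_add {f g : X → ℝ≥0∞} (hg : Measurable g)
    (a : ℝ≥0∞) {c : ℝ≥0∞} (hc : c ≠ ⊤) :
    ⨍⁻ z, (a + c * f z + g z) ∂ν = a + c * ⨍⁻ z, f z ∂ν + ⨍⁻ z, g z ∂ν := by
  simp only [laverage_eq']
  rw [lintegral_add_right' _ hg.aemeasurable, lintegral_add_left measurable_const,
    lintegral_const, measure_univ, mul_one, lintegral_const_mul' _ _ hc]

theorem enorm_setAverage_sub_le_of_forall_le {μ : Measure X} {B : Set X} {u v w : X → ℝ}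
    {a c C : ℝ} (hB : MeasurableSet B) (hB0 : μ B ≠ 0) (hBfin : μ B ≠ ⊤) (hu : IntegrableOn u B μ)
    (hw : Measurable w) (hC : 0 ≤ C) (hpt : ∀ z ∈ B, |u z - a| ≤ c + C * |v z| + |w z|) :
    ‖(⨍ z in B, u z ∂μ) - a‖ₑ ≤ ENNReal.ofReal c + ENNReal.ofReal C * ⨍⁻ z in B, ‖v z‖ₑ ∂μ
      + ⨍⁻ z in B, ‖w z‖ₑ ∂μ := by
  have : IsFiniteMeasure (μ.restrict B) := isFiniteMeasure_restrict.2 hBfin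
  have : NeZero (μ.restrict B) := ⟨by simpa [Measure.restrict_eq_zero] using hB0⟩
  refine (enorm_average_sub_le hu a).trans ?_
  rw [← laverage_const_add_mul_add hw.enorm _ ENNReal.ofReal_ne_top]
  refine laverage_mono_ae (ae_restrict_of_forall_mem hB fun z hz => ?_)
  simp only [Real.enorm_eq_ofReal_abs]
  rw [← ENNReal.ofReal_mul hC]
  exact (ENNReal.ofReal_le_ofReal (hpt z hz)).trans
    (ENNReal.ofReal_add_le.trans (add_le_add ENNReal.ofReal_add_le le_rfl))

end Average

section Hajlasz

variable {X : Type*} [MetricSpace X] [MeasurableSpace X] {μ : Measure X} {s p : ℝ}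
  {u v : X → ℝ} {g h : X → ℝ≥0∞}

theorem hajNorm_eq_iInf (u : X → ℝ) :
    hajNorm μ s p u = ⨅ (g) (_ : IsSGrad μ s u g), eLpNorm' u p μ + eLpNorm' g p μ := by
  simp only [hajNorm, eLpNorm', Real.enorm_eq_ofReal_abs, enorm_eq_self, ENNReal.add_iInf]

theorem hajNorm_le_of_isSGrad (hg : IsSGrad μ s u g) :
    hajNorm μ s p u ≤ eLpNorm' u p μ + eLpNorm' g p μ := by
  rw [hajNorm_eq_iInf]
  exact iInf₂_le g hg

theorem exists_isSGrad_of_hajNorm_lt {C : ℝ≥0∞} (h : hajNorm μ s p u < C) :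
    ∃ g, IsSGrad μ s u g ∧ eLpNorm' u p μ + eLpNorm' g p μ < C := by
  rw [hajNorm_eq_iInf] at h
  simpa only [iInf_lt_iff, exists_prop] using h

theorem MemHaj.exists_isSGrad (hu : MemHaj μ s p u) :
    ∃ g, IsSGrad μ s u g ∧ eLpNorm' u p μ < ⊤ ∧ eLpNorm' g p μ < ⊤ := by
  obtain ⟨g, hg, hgu⟩ := exists_isSGrad_of_hajNorm_lt (ENNReal.lt_add_right hu.2.ne one_ne_zero)
  have hfin := hgu.trans (ENNReal.add_lt_top.2 ⟨hu.2, ENNReal.one_lt_top⟩)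
  exact ⟨g, hg, le_self_add.trans_lt hfin, le_add_self.trans_lt hfin⟩

theorem eLpNorm'_le_hajNorm : eLpNorm' u p μ ≤ hajNorm μ s p u := by
  rw [hajNorm_eq_iInf]
  exact le_iInf₂ fun _ _ => le_self_add

theorem IsSGrad.abs (hg : IsSGrad μ s u g) : IsSGrad μ s (fun x => |u x|) g := by
  obtain ⟨hgm, E, hE, hu⟩ := hg
  exact ⟨hgm, E, hE, fun x hx y hy =>
    (ENNReal.ofReal_le_ofReal (abs_abs_sub_abs_le_abs_sub _ _)).trans (hu x hx y hy)⟩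

theorem IsSGrad.const_mul (hg : IsSGrad μ s u g) (c : ℝ) :
    IsSGrad μ s (fun x => c * u x) (fun x => ‖c‖ₑ * g x) := by
  obtain ⟨hgm, E, hE, hu⟩ := hg
  refine ⟨measurable_const.mul hgm, E, hE, fun x hx y hy => ?_⟩
  rw [← mul_sub, abs_mul, ENNReal.ofReal_mul (abs_nonneg c), ← Real.enorm_eq_ofReal_abs]
  calc ‖c‖ₑ * ENNReal.ofReal |u x - u y|
      ≤ ‖c‖ₑ * (ENNReal.ofReal (dist x y ^ s) * (g x + g y)) := by gcongr; exact hu x hx y hy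
    _ = ENNReal.ofReal (dist x y ^ s) * (‖c‖ₑ * g x + ‖c‖ₑ * g y) := by ring

theorem IsSGrad.add (hg : IsSGrad μ s u g) (hh : IsSGrad μ s v h) :
    IsSGrad μ s (fun x => u x + v x) (fun x => g x + h x) := by
  obtain ⟨hgm, E, hE, hu⟩ := hg
  obtain ⟨hhm, F, hF, hv⟩ := hh
  refine ⟨hgm.add hhm, E ∪ F, measure_union_null hE hF, fun x hx y hy => ?_⟩
  simp only [mem_union, not_or] at hx hy
  calc ENNReal.ofReal |u x + v x - (u y + v y)|
      ≤ ENNReal.ofReal |u x - u y| + ENNReal.ofReal |v x - v y| := by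
        rw [← ENNReal.ofReal_add (abs_nonneg _) (abs_nonneg _)]
        exact ENNReal.ofReal_le_ofReal ((congrArg _ (by ring)).trans_le (abs_add_le _ _))
    _ ≤ ENNReal.ofReal (dist x y ^ s) * (g x + g y) + ENNReal.ofReal (dist x y ^ s) * (h x + h y) :=
        add_le_add (hu x hx.1 y hy.1) (hv x hx.2 y hy.2)
    _ = ENNReal.ofReal (dist x y ^ s) * ((g x + h x) + (g y + h y)) := by ring

theorem hajNorm_abs_le : hajNorm μ s p (fun x => |u x|) ≤ hajNorm μ s p u := by
  rw [hajNorm_eq_iInf u]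
  refine le_iInf₂ fun g hg => (hajNorm_le_of_isSGrad hg.abs).trans_eq ?_
  simp [eLpNorm', Real.enorm_eq_ofReal_abs]

theorem hajNorm_add_le (hp : 1 ≤ p) (hu : Measurable u) (hv : Measurable v) :
    hajNorm μ s p (fun x => u x + v x) ≤ hajNorm μ s p u + hajNorm μ s p v := by
  rw [hajNorm_eq_iInf u, hajNorm_eq_iInf v]
  simp only [ENNReal.iInf_add, ENNReal.add_iInf]
  refine le_iInf₂ fun h hh => le_iInf₂ fun g hg => (hajNorm_le_of_isSGrad (hg.add hh)).trans ?_
  calc eLpNorm' (fun x => u x + v x) p μ + eLpNorm' (fun x => g x + h x) p μ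
      ≤ (eLpNorm' u p μ + eLpNorm' v p μ) + (eLpNorm' g p μ + eLpNorm' h p μ) :=
        add_le_add (eLpNorm'_add_le hu.aestronglyMeasurable hv.aestronglyMeasurable hp)
          (eLpNorm'_add_le hg.1.aestronglyMeasurable hh.1.aestronglyMeasurable hp)
    _ = eLpNorm' u p μ + eLpNorm' g p μ + (eLpNorm' v p μ + eLpNorm' h p μ) := by ring

theorem hajNorm_abs_add_abs_le (hp : 1 ≤ p) (hu : Measurable u) (hv : Measurable v) :
    hajNorm μ s p (fun x => |u x| + |v x|) ≤ hajNorm μ s p u + hajNorm μ s p v :=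
  (hajNorm_add_le hp hu.abs hv.abs).trans (add_le_add hajNorm_abs_le hajNorm_abs_le)

theorem hajNorm_const_mul_le (hp : 0 < p) (c : ℝ) :
    hajNorm μ s p (fun x => c * u x) ≤ ‖c‖ₑ * hajNorm μ s p u := by
  rcases eq_or_ne c 0 with rfl | hc
  · have h0 : IsSGrad μ s (fun x => 0 * u x) 0 := ⟨measurable_const, ∅, measure_empty, by simp⟩
    simpa [eLpNorm', ENNReal.zero_rpow_of_pos hp, ENNReal.zero_rpow_of_pos (inv_pos.2 hp)]
      using hajNorm_le_of_isSGrad (p := p) h0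
  rw [hajNorm_eq_iInf u, ENNReal.mul_iInf_of_ne (by simpa using hc) enorm_ne_top]
  refine le_iInf fun g => ?_
  rw [ENNReal.mul_iInf_of_ne (by simpa using hc) enorm_ne_top]
  refine le_iInf fun hg => (hajNorm_le_of_isSGrad (hg.const_mul c)).trans_eq ?_
  rw [eLpNorm'_const_mul_ennreal hp enorm_ne_top, mul_add, ← eLpNorm'_const_smul c hp]
  rfl

end Hajlasz

section TsumAbs

variable {X : Type*} {a : ℕ → X → ℝ} {x : X}

/-- `∑ |a j|`, set to `1` where the series diverges: this keeps it real-valued without losing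
`1 ≤ tsumAbs a` at points where some `1 ≤ |a j|`. -/
noncomputable def tsumAbs (a : ℕ → X → ℝ) (x : X) : ℝ :=
  if ∑' j, ‖a j x‖ₑ = ⊤ then 1 else (∑' j, ‖a j x‖ₑ).toReal

theorem one_le_tsumAbs {j : ℕ} (h : 1 ≤ |a j x|) : 1 ≤ tsumAbs a x := by
  unfold tsumAbs
  split_ifs with htop
  · exact le_rfl
  · have : ENNReal.ofReal 1 ≤ ∑' j, ‖a j x‖ₑ :=
      (Real.enorm_eq_ofReal_abs (a j x) ▸ ENNReal.ofReal_le_ofReal h).trans (ENNReal.le_tsum j)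
    simpa using ENNReal.toReal_mono htop this

theorem abs_le_tsumAbs (h : ∑' j, ‖a j x‖ₑ ≠ ⊤) (j : ℕ) : |a j x| ≤ tsumAbs a x := by
  rw [tsumAbs, if_neg h, ← Real.norm_eq_abs, ← toReal_enorm]
  exact ENNReal.toReal_mono h (ENNReal.le_tsum j)

theorem enorm_tsumAbs_le : ‖tsumAbs a x‖ₑ ≤ ∑' j, ‖a j x‖ₑ := by
  unfold tsumAbs
  split_ifs with h
  · exact h ▸ le_top
  · rw [Real.enorm_of_nonneg ENNReal.toReal_nonneg, ENNReal.ofReal_toReal h]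

variable [MeasurableSpace X] {μ : Measure X} {p : ℝ}

theorem measurable_tsumAbs (ha : ∀ j, Measurable (a j)) : Measurable (tsumAbs a) := by
  have hS : Measurable fun x => ∑' j, ‖a j x‖ₑ := Measurable.tsum fun j => (ha j).enorm
  exact Measurable.ite (hS (measurableSet_singleton ⊤)) measurable_const hS.ennreal_toReal

theorem ae_tsum_enorm_ne_top (hp : 1 ≤ p) (ha : ∀ j, Measurable (a j))
    (hfin : ∑' j, eLpNorm' (a j) p μ ≠ ⊤) : ∀ᵐ x ∂μ, ∑' j, ‖a j x‖ₑ ≠ ⊤ := by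
  have hp0 : 0 < p := zero_lt_one.trans_le hp
  have hsum := summable_norm_of_tsum_eLpNorm_ne_top (μ := μ) (p := ENNReal.ofReal p)
    (by simpa using hp) (fun j => (ha j).aestronglyMeasurable)
    (by simpa [eLpNorm_eq_eLpNorm', hp0, hp0.le] using hfin)
  filter_upwards [hsum] with x hx using tsum_enorm_ne_top_iff_summable_norm.2 hx

variable [MetricSpace X] {s : ℝ}

theorem isSGrad_tsumAbs {g : ℕ → X → ℝ≥0∞} (hg : ∀ j, IsSGrad μ s (a j) (g j))
    (hnull : μ {x | ∑' j, ‖a j x‖ₑ = ⊤} = 0) :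
    IsSGrad μ s (tsumAbs a) (fun x => ∑' j, g j x) := by
  choose E hE0 hE using fun j => (hg j).2
  refine ⟨Measurable.tsum fun j => (hg j).1, {x | ∑' j, ‖a j x‖ₑ = ⊤} ∪ ⋃ j, E j,
    measure_union_null hnull (measure_iUnion_null hE0), fun x hx y hy => ?_⟩
  simp only [mem_union, mem_ofPred_eq, mem_iUnion, not_or, not_exists] at hx hy
  have hxy : ∀ x y, ∑' j, ‖a j x‖ₑ ≤ ∑' j, ‖a j y‖ₑ + ∑' j, ‖a j x - a j y‖ₑ := fun x y => by
    rw [← ENNReal.tsum_add]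
    exact ENNReal.tsum_le_tsum fun j => by simpa using enorm_add_le (a j y) (a j x - a j y)
  rw [tsumAbs, tsumAbs, if_neg hx.1, if_neg hy.1]
  calc ENNReal.ofReal |(∑' j, ‖a j x‖ₑ).toReal - (∑' j, ‖a j y‖ₑ).toReal|
      ≤ ∑' j, ‖a j x - a j y‖ₑ := by
        refine ENNReal.ofReal_abs_toReal_sub_le hx.1 hy.1 (hxy x y) ?_
        simpa only [enorm_sub_rev] using hxy y x
    _ ≤ ∑' j, ENNReal.ofReal (dist x y ^ s) * (g j x + g j y) :=
        ENNReal.tsum_le_tsum fun j => by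
          simpa only [Real.enorm_eq_ofReal_abs] using hE j x (hx.2 j) y (hy.2 j)
    _ = ENNReal.ofReal (dist x y ^ s) * (∑' j, g j x + ∑' j, g j y) := by
        rw [ENNReal.tsum_mul_left, ENNReal.tsum_add]

theorem hajNorm_tsumAbs_le (hp : 1 ≤ p) (ha : ∀ j, Measurable (a j)) {b : ℕ → ℝ≥0∞}
    (hb : ∀ j, hajNorm μ s p (a j) < b j) : hajNorm μ s p (tsumAbs a) ≤ ∑' j, b j := by
  rcases eq_or_ne (∑' j, b j) ⊤ with hfin | hfin
  · exact hfin ▸ le_top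
  choose g hg hgb using fun j => exists_isSGrad_of_hajNorm_lt (hb j)
  have hsum : ∑' j, eLpNorm' (a j) p μ + ∑' j, eLpNorm' (g j) p μ ≤ ∑' j, b j := by
    rw [← ENNReal.tsum_add]
    exact ENNReal.tsum_le_tsum fun j => (hgb j).le
  have hnull : μ {x | ∑' j, ‖a j x‖ₑ = ⊤} = 0 := by
    simpa [ae_iff] using ae_tsum_enorm_ne_top (μ := μ) hp ha
      (ne_top_of_le_ne_top hfin (le_self_add.trans hsum))
  refine (hajNorm_le_of_isSGrad (isSGrad_tsumAbs hg hnull)).trans (le_trans (add_le_add ?_ ?_) hsum)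
  · calc eLpNorm' (tsumAbs a) p μ ≤ eLpNorm' (fun x => ∑' j, ‖a j x‖ₑ) p μ :=
          eLpNorm'_mono_enorm_ae (zero_le_one.trans hp) (ae_of_all _ fun x => enorm_tsumAbs_le)
      _ ≤ ∑' j, eLpNorm' (a j) p μ := by
          simpa only [eLpNorm'_enorm] using
            eLpNorm'_tsum_le (fun j => (ha j).enorm.aemeasurable) hp
  · exact eLpNorm'_tsum_le (fun j => (hg j).1.aemeasurable) hp

theorem ae_abs_le_tsumAbs (hp : 1 ≤ p) (ha : ∀ j, Measurable (a j)) {b : ℕ → ℝ≥0∞}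
    (hb : ∀ j, hajNorm μ s p (a j) < b j) (hfin : ∑' j, b j ≠ ⊤) :
    ∀ᵐ x ∂μ, ∀ j, |a j x| ≤ tsumAbs a x := by
  refine (ae_tsum_enorm_ne_top hp ha (ne_top_of_le_ne_top hfin ?_)).mono
    fun x hx => abs_le_tsumAbs hx
  exact ENNReal.tsum_le_tsum fun j => eLpNorm'_le_hajNorm.trans (hb j).le

end TsumAbs

section Capacity

variable {X : Type*} [MetricSpace X] [MeasurableSpace X] {μ : Measure X} {s p : ℝ}
  {E F : Set X} {u : X → ℝ}

theorem hCap_mono (h : E ⊆ F) : hCap μ s p E ≤ hCap μ s p F :=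
  iInf₂_mono fun _ _ => iInf_mono' fun ⟨U, hU, hFU, h1⟩ => ⟨⟨U, hU, h.trans hFU, h1⟩, le_rfl⟩

theorem hCap_le_hajNorm_rpow {U : Set X} (hu : MemHaj μ s p u) (hU : IsOpen U) (hEU : E ⊆ U)
    (h1 : ∀ x ∈ U, 1 ≤ u x) : hCap μ s p E ≤ hajNorm μ s p u ^ p :=
  iInf₂_le_of_le u hu (iInf_le _ ⟨U, hU, hEU, h1⟩)

theorem exists_admissible_of_hCap_lt {C : ℝ≥0∞} (h : hCap μ s p E < C) :
    ∃ u U, MemHaj μ s p u ∧ IsOpen U ∧ E ⊆ U ∧ (∀ x ∈ U, 1 ≤ u x) ∧ hajNorm μ s p u ^ p < C := by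
  simp only [hCap, iInf_lt_iff] at h
  obtain ⟨u, hu, ⟨U, hU, hEU, h1⟩, hlt⟩ := h
  exact ⟨u, U, hu, hU, hEU, h1, hlt⟩

theorem hCap_iUnion_le (hp : 1 ≤ p) {T : ℕ → Set X} {b : ℕ → ℝ≥0∞}
    (hT : ∀ n, hCap μ s p (T n) < b n ^ p) : hCap μ s p (⋃ n, T n) ≤ (∑' n, b n) ^ p := by
  have hp0 : 0 < p := zero_lt_one.trans_le hp
  rcases eq_or_ne (∑' n, b n) ⊤ with htop | hfin
  · simp [htop, ENNReal.top_rpow_of_pos hp0]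
  choose φ V hφ hV hTV hφV hφb using fun n => exists_admissible_of_hCap_lt (hT n)
  have hΦ : hajNorm μ s p (tsumAbs φ) ≤ ∑' n, b n :=
    hajNorm_tsumAbs_le hp (fun n => (hφ n).1) fun n => (ENNReal.rpow_lt_rpow_iff hp0).1 (hφb n)
  refine (hCap_le_hajNorm_rpow ⟨measurable_tsumAbs fun n => (hφ n).1, hΦ.trans_lt hfin.lt_top⟩
    (isOpen_iUnion hV) (iUnion_mono hTV) ?_).trans (ENNReal.rpow_le_rpow hΦ hp0.le)
  simp only [mem_iUnion]
  rintro x ⟨n, hx⟩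
  exact one_le_tsumAbs ((hφV n x hx).trans (le_abs_self _))

theorem hCap_iInter_iUnion_eq_zero (hp : 1 ≤ p) {T : ℕ → ℕ → Set X}
    (hT : ∀ m n, hCap μ s p (T m n) < ((2⁻¹ : ℝ≥0∞) ^ (n + m)) ^ p) :
    hCap μ s p (⋂ m, ⋃ n, T m n) = 0 := by
  have hp0 : 0 < p := zero_lt_one.trans_le hp
  have hbound (m : ℕ) : hCap μ s p (⋂ m, ⋃ n, T m n) ≤ (2⁻¹ ^ m * 2) ^ p := by
    have hsum : ∑' n, (2⁻¹ : ℝ≥0∞) ^ (n + m) = 2⁻¹ ^ m * 2 := by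
      simp_rw [pow_add]
      rw [ENNReal.tsum_mul_right, ENNReal.tsum_geometric_two, mul_comm]
    exact (hCap_mono (iInter_subset _ m)).trans (hsum ▸ hCap_iUnion_le hp (hT m))
  have hlim : Tendsto (fun m : ℕ => ((2⁻¹ : ℝ≥0∞) ^ m * 2) ^ p) atTop (𝓝 0) := by
    have := ENNReal.Tendsto.mul_const (ENNReal.tendsto_pow_atTop_nhds_zero_of_lt_one
      (by norm_num : (2⁻¹ : ℝ≥0∞) < 1)) (Or.inr (by norm_num : (2 : ℝ≥0∞) ≠ ⊤))
    rw [zero_mul] at this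
    simpa [Function.comp_def, ENNReal.zero_rpow_of_pos hp0] using
      ((ENNReal.continuous_rpow_const (y := p)).tendsto 0).comp this
  exact le_antisymm (ge_of_tendsto' hlim hbound) bot_le

end Capacity

section Truncation

variable {X : Type*} {u : X → ℝ} {g : X → ℝ≥0∞}

theorem abs_max_abs_sub_sub_max_abs_sub_le (a b k : ℝ) :
    |max (|a| - k) 0 - max (|b| - k) 0| ≤ |a - b| :=
  (abs_max_sub_max_le_abs _ _ 0).trans (by simpa using abs_abs_sub_abs_le_abs_sub a b)

theorem ofReal_abs_sub_le_mul_of_le_half {a b k : ℝ} {D ga gb : ℝ≥0∞} (hD : D ≤ 1)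
    (hb : |b| ≤ k / 2) (hgb : gb ≤ ENNReal.ofReal (k / 2))
    (hab : ENNReal.ofReal |a - b| ≤ D * (ga + gb)) : ENNReal.ofReal (|a| - k) ≤ D * ga := by
  rcases le_or_gt |a| k with hak | hak
  · simp [ENNReal.ofReal_of_nonpos (sub_nonpos.2 hak)]
  refine ENNReal.le_of_add_le_add_right (ENNReal.ofReal_ne_top (r := k / 2)) ?_
  calc ENNReal.ofReal (|a| - k) + ENNReal.ofReal (k / 2) = ENNReal.ofReal (|a| - k / 2) := by
        rw [← ENNReal.ofReal_add (by linarith) (by linarith [abs_nonneg b])]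
        ring_nf
    _ ≤ ENNReal.ofReal |a - b| :=
        ENNReal.ofReal_le_ofReal (by linarith [abs_sub_abs_le_abs_sub a b])
    _ ≤ D * ga + D * gb := hab.trans_eq (mul_add _ _ _)
    _ ≤ D * ga + ENNReal.ofReal (k / 2) := by
        gcongr
        exact (mul_le_of_le_one_left zero_le hD).trans hgb

/-- Dropping `g` where both `|u|` and `g` are at most `k / 2` is what makes this gradient of
`(|u| - k)₊` tend to `0` as `k → ∞`. -/
noncomputable def truncGrad (u : X → ℝ) (g : X → ℝ≥0∞) (k : ℝ) (x : X) : ℝ≥0∞ :=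
  {z | k / 2 < |u z| ∨ ENNReal.ofReal (k / 2) < g z}.indicator g x + ENNReal.ofReal (|u x| - k)

theorem le_truncGrad {k : ℝ} {x : X} (hx : k / 2 < |u x| ∨ ENNReal.ofReal (k / 2) < g x) :
    g x ≤ truncGrad u g k x := by
  simp only [truncGrad, indicator_apply, mem_ofPred_eq, if_pos hx]
  exact le_self_add

theorem ofReal_truncation_le_truncGrad (k : ℝ) (x : X) :
    ENNReal.ofReal (max (|u x| - k) 0) ≤ truncGrad u g k x := by
  rw [ENNReal.ofReal_max, ENNReal.ofReal_zero, max_eq_left zero_le]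
  exact le_add_self

theorem truncGrad_le {k : ℝ} (hk : 0 ≤ k) (x : X) : truncGrad u g k x ≤ g x + ‖u x‖ₑ := by
  rw [Real.enorm_eq_ofReal_abs]
  exact add_le_add (indicator_le_self _ _ _) (ENNReal.ofReal_le_ofReal (by linarith))

theorem enorm_truncation_le {k : ℝ} (hk : 0 ≤ k) (x : X) : ‖max (|u x| - k) 0‖ₑ ≤ ‖u x‖ₑ := by
  simp only [Real.enorm_eq_ofReal_abs]
  refine ENNReal.ofReal_le_ofReal ?_
  rw [abs_of_nonneg (le_max_right _ _)]
  exact max_le (by linarith [le_abs_self |u x|]) (abs_nonneg _)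

theorem tendsto_truncGrad_zero {x : X} (hgx : g x ≠ ⊤) :
    Tendsto (fun k : ℕ => truncGrad u g k x) atTop (𝓝 0) := by
  refine tendsto_const_nhds.congr' ?_
  filter_upwards [eventually_ge_atTop ⌈2 * max |u x| (g x).toReal⌉₊] with k hk
  have hk' : 2 * max |u x| (g x).toReal ≤ k := Nat.ceil_le.1 hk
  have hu : |u x| ≤ k / 2 := by linarith [le_max_left |u x| (g x).toReal]
  have hg : g x ≤ ENNReal.ofReal (k / 2) :=
    (ENNReal.le_ofReal_iff_toReal_le hgx (by positivity)).2
      (by linarith [le_max_right |u x| (g x).toReal])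
  rw [truncGrad, indicator_of_notMem (by simpa using ⟨hu, hg⟩),
    ENNReal.ofReal_of_nonpos (by linarith [abs_nonneg (u x)]), add_zero]

variable [MeasurableSpace X] {μ : Measure X} {p : ℝ}

theorem measurable_truncGrad (hu : Measurable u) (hg : Measurable g) (k : ℝ) :
    Measurable (truncGrad u g k) :=
  (hg.indicator ((measurableSet_lt measurable_const hu.abs).union
    (measurableSet_lt measurable_const hg))).add (hu.abs.sub measurable_const).ennreal_ofReal

theorem eLpNorm'_truncGrad_le (hp : 1 ≤ p) (hu : Measurable u) (hg : Measurable g) {k : ℝ}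
    (hk : 0 ≤ k) : eLpNorm' (truncGrad u g k) p μ ≤ eLpNorm' g p μ + eLpNorm' u p μ :=
  calc eLpNorm' (truncGrad u g k) p μ ≤ eLpNorm' (fun x => g x + ‖u x‖ₑ) p μ :=
        eLpNorm'_mono_enorm_ae (zero_le_one.trans hp) (ae_of_all _ (truncGrad_le hk))
    _ ≤ eLpNorm' g p μ + eLpNorm' u p μ := eLpNorm'_add_enorm_le hp hg hu

theorem tendsto_eLpNorm'_truncation (hp : 0 < p) (hu : Measurable u)
    (huLp : eLpNorm' u p μ ≠ ⊤) :
    Tendsto (fun k : ℕ => eLpNorm' (fun x => max (|u x| - k) 0) p μ) atTop (𝓝 0) := by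
  simp only [← eLpNorm'_enorm (f := fun x => max (|u x| - _) 0)]
  refine tendsto_eLpNorm'_zero_of_dominated hp
    (fun k => ((hu.abs.sub measurable_const).max measurable_const).enorm.aemeasurable)
    (fun k => ae_of_all _ (enorm_truncation_le k.cast_nonneg)) (by rwa [eLpNorm'_enorm])
    (ae_of_all _ fun x => tendsto_const_nhds.congr' ?_)
  filter_upwards [eventually_ge_atTop ⌈|u x|⌉₊] with k hk
  simp [Nat.ceil_le.1 hk]

theorem tendsto_eLpNorm'_truncGrad (hp : 1 ≤ p) (hu : Measurable u) (hg : Measurable g)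
    (huLp : eLpNorm' u p μ ≠ ⊤) (hgLp : eLpNorm' g p μ ≠ ⊤) :
    Tendsto (fun k : ℕ => eLpNorm' (truncGrad u g k) p μ) atTop (𝓝 0) := by
  have hp0 : 0 < p := zero_lt_one.trans_le hp
  have hg_fin : ∀ᵐ x ∂μ, g x ≠ ⊤ := by
    filter_upwards [ae_lt_top' (hg.pow_const p).aemeasurable
      (lintegral_rpow_enorm_lt_top_of_eLpNorm'_lt_top hp0 hgLp.lt_top).ne] with x hx
    exact ((ENNReal.rpow_lt_top_iff_of_pos hp0).1 hx).ne
  refine tendsto_eLpNorm'_zero_of_dominated hp0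
    (fun k => (measurable_truncGrad hu hg k).aemeasurable)
    (fun k => ae_of_all _ (truncGrad_le k.cast_nonneg)) ?_
    (hg_fin.mono fun x hx => tendsto_truncGrad_zero hx)
  exact ne_top_of_le_ne_top (ENNReal.add_ne_top.2 ⟨hgLp, huLp⟩) (eLpNorm'_add_enorm_le hp hg hu)

variable [MetricSpace X] {s : ℝ}

theorem IsSGrad.truncation (hg : IsSGrad μ s u g) (hu : Measurable u) {k : ℝ} (hk : 0 ≤ k) :
    IsSGrad μ s (fun x => max (|u x| - k) 0) (truncGrad u g k) := by
  obtain ⟨hgm, E, hE, hgE⟩ := hg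
  refine ⟨measurable_truncGrad hu hgm k, E, hE, fun x hx y hy => ?_⟩
  dsimp only
  wlog hyx : |u y| ≤ |u x| generalizing x y
  · simpa only [abs_sub_comm, dist_comm, add_comm] using this y hy x hx (le_of_not_ge hyx)
  rcases le_or_gt 1 (dist x y ^ s) with hd | hd
  · calc ENNReal.ofReal |max (|u x| - k) 0 - max (|u y| - k) 0|
        ≤ ENNReal.ofReal (max (|u x| - k) 0) + ENNReal.ofReal (max (|u y| - k) 0) := by
          rw [← ENNReal.ofReal_add (le_max_right _ _) (le_max_right _ _)]
          have := le_max_right (|u x| - k) 0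
          have := le_max_right (|u y| - k) 0
          exact ENNReal.ofReal_le_ofReal (abs_sub_le_iff.2 ⟨by linarith, by linarith⟩)
      _ ≤ truncGrad u g k x + truncGrad u g k y :=
          add_le_add (ofReal_truncation_le_truncGrad k x) (ofReal_truncation_le_truncGrad k y)
      _ ≤ ENNReal.ofReal (dist x y ^ s) * (truncGrad u g k x + truncGrad u g k y) :=
          le_mul_of_one_le_left zero_le (by simpa using ENNReal.ofReal_le_ofReal hd)
  rcases le_or_gt |u x| k with hxk | hxk
  · simp [max_eq_right (sub_nonpos.2 hxk), max_eq_right (sub_nonpos.2 (hyx.trans hxk))]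
  have hgx : g x ≤ truncGrad u g k x := le_truncGrad (Or.inl (by linarith))
  by_cases hyS : k / 2 < |u y| ∨ ENNReal.ofReal (k / 2) < g y
  · calc ENNReal.ofReal |max (|u x| - k) 0 - max (|u y| - k) 0|
        ≤ ENNReal.ofReal |u x - u y| :=
          ENNReal.ofReal_le_ofReal (abs_max_abs_sub_sub_max_abs_sub_le _ _ _)
      _ ≤ ENNReal.ofReal (dist x y ^ s) * (g x + g y) := hgE x hx y hy
      _ ≤ ENNReal.ofReal (dist x y ^ s) * (truncGrad u g k x + truncGrad u g k y) := by
          gcongr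
          exact le_truncGrad hyS
  push Not at hyS
  calc ENNReal.ofReal |max (|u x| - k) 0 - max (|u y| - k) 0| = ENNReal.ofReal (|u x| - k) := by
        rw [max_eq_right (show |u y| - k ≤ 0 by linarith),
          max_eq_left (show 0 ≤ |u x| - k by linarith), sub_zero, abs_of_nonneg (by linarith)]
    _ ≤ ENNReal.ofReal (dist x y ^ s) * g x :=
        ofReal_abs_sub_le_mul_of_le_half (by simpa using ENNReal.ofReal_le_ofReal hd.le)
          hyS.1 hyS.2 (hgE x hx y hy)
    _ ≤ ENNReal.ofReal (dist x y ^ s) * (truncGrad u g k x + truncGrad u g k y) := by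
        gcongr
        exact hgx.trans le_self_add

theorem MemHaj.exists_truncation (hp : 1 ≤ p) (hu : MemHaj μ s p u) :
    ∃ w : ℕ → X → ℝ, (∀ k, MemHaj μ s p (w k)) ∧
      Tendsto (fun k => hajNorm μ s p (w k)) atTop (𝓝 0) ∧ ∀ k x, |u x| ≤ k + |w k x| := by
  have hp0 : 0 < p := zero_lt_one.trans_le hp
  obtain ⟨g, hg, huLp, hgLp⟩ := hu.exists_isSGrad
  have hnorm (k : ℕ) : hajNorm μ s p (fun x => max (|u x| - k) 0)
      ≤ eLpNorm' (fun x => max (|u x| - k) 0) p μ + eLpNorm' (truncGrad u g k) p μ :=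
    hajNorm_le_of_isSGrad (hg.truncation hu.1 k.cast_nonneg)
  refine ⟨fun k x => max (|u x| - k) 0, fun k => ⟨?_, (hnorm k).trans_lt ?_⟩, ?_,
    fun k x => by linarith [le_max_left (|u x| - k) 0, le_abs_self (max (|u x| - k) 0)]⟩
  · exact (hu.1.abs.sub measurable_const).max measurable_const
  · refine ENNReal.add_lt_top.2 ⟨?_, ?_⟩
    · exact (eLpNorm'_mono_enorm_ae hp0.le
        (ae_of_all _ (enorm_truncation_le k.cast_nonneg))).trans_lt huLp
    · exact (eLpNorm'_truncGrad_le hp hu.1 hg.1 k.cast_nonneg).trans_lt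
        (ENNReal.add_lt_top.2 ⟨hgLp, huLp⟩)
  · have hsum := (tendsto_eLpNorm'_truncation hp0 hu.1 huLp.ne).add
      (tendsto_eLpNorm'_truncGrad hp hu.1 hg.1 huLp.ne hgLp.ne)
    rw [add_zero] at hsum
    exact tendsto_of_tendsto_of_tendsto_of_le_of_le tendsto_const_nhds hsum (fun _ => zero_le) hnorm

end Truncation

section MaximalFunction

variable {X : Type*} [MetricSpace X] [MeasurableSpace X] {μ : Measure X}
  {𝓑 : X → Set (Set X)} {x : X} {B : Set X} {r : ℝ}

theorem IsDiffBasis.subset_ball (h𝓑 : IsDiffBasis μ 𝓑) (hB : B ∈ 𝓑 x) (hdiam : diam B < r) :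
    B ⊆ ball x r := fun _ hz =>
  mem_ball.2 ((dist_le_diam_of_mem (h𝓑.bounded x B hB) hz (h𝓑.mem_of x B hB)).trans_lt hdiam)

theorem setLAverage_le_intMax (hB : B ∈ 𝓑 x) (hxB : x ∈ B) (f : X → ℝ) :
    ⨍⁻ z in B, ‖f z‖ₑ ∂μ ≤ intMax μ 𝓑 f x := by
  simp only [setLAverage_eq, Real.enorm_eq_ofReal_abs]
  exact le_iSup₂_of_le B ⟨x, hB⟩ (le_iSup_of_le hxB le_rfl)

theorem intMax_mono_ae {f h : X → ℝ} (hfh : ∀ᵐ z ∂μ, |f z| ≤ |h z|) (x : X) :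
    intMax μ 𝓑 f x ≤ intMax μ 𝓑 h x :=
  iSup₂_mono fun _ _ => iSup_mono fun _ => ENNReal.div_le_div_right
    (lintegral_mono_ae (ae_restrict_of_ae (hfh.mono fun _ hz => ENNReal.ofReal_le_ofReal hz))) _

theorem intMax_const_mul (c : ℝ) (f : X → ℝ) (x : X) :
    intMax μ 𝓑 (fun z => c * f z) x = ‖c‖ₑ * intMax μ 𝓑 f x := by
  simp only [intMax, ENNReal.mul_iSup, abs_mul, ENNReal.ofReal_mul (abs_nonneg c),
    lintegral_const_mul' _ _ ENNReal.ofReal_ne_top, mul_div_assoc, Real.enorm_eq_ofReal_abs]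

theorem one_le_intMax (h𝓑 : IsDiffBasis μ 𝓑) (hfin : ∀ r, 0 < r → μ (ball x r) < ⊤)
    {U : Set X} (hU : IsOpen U) (hxU : x ∈ U) {f : X → ℝ} (hf : ∀ z ∈ U, 1 ≤ |f z|) :
    1 ≤ intMax μ 𝓑 f x := by
  obtain ⟨r, hr, hrU⟩ := Metric.isOpen_iff.1 hU x hxU
  obtain ⟨B, hB, hdiam⟩ := h𝓑.small x r hr
  have hBr := h𝓑.subset_ball hB hdiam
  calc 1 = ⨍⁻ _ in B, 1 ∂μ :=
        (setLAverage_one (h𝓑.pos x B hB).ne' ((measure_mono hBr).trans_lt (hfin r hr)).ne).symm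
    _ ≤ ⨍⁻ z in B, ‖f z‖ₑ ∂μ :=
        laverage_mono_ae (ae_restrict_of_forall_mem (h𝓑.measurableSet x B hB) fun z hz => by
          simpa [Real.enorm_eq_ofReal_abs] using ENNReal.ofReal_le_ofReal (hf z (hrU (hBr hz))))
    _ ≤ intMax μ 𝓑 f x := setLAverage_le_intMax hB (h𝓑.mem_of x B hB) f

end MaximalFunction

section Differentiation

variable {X : Type*} [MetricSpace X] [MeasurableSpace X] {μ : Measure X}
  {𝓑 : X → Set (Set X)} {x : X}

theorem basisLim_setAverage (h𝓑 : IsDiffBasis μ 𝓑) (hfin : ∀ r, 0 < r → μ (ball x r) < ⊤)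
    {u : X → ℝ} (hu : IntegrableAtFilter u (𝓝 x) μ)
    (htrunc : ∀ η : ℝ, 0 < η → ∃ (t : ℝ) (w : X → ℝ), Measurable w ∧
      (∀ z, |u z| ≤ t + |w z|) ∧ intMax μ 𝓑 w x ≤ ENNReal.ofReal η)
    (hcont : ∀ η : ℝ, 0 < η → ∃ (v : X → ℝ) (U : Set X), Measurable v ∧
      (∀ z ∈ U, 1 ≤ |v z|) ∧ ContinuousWithinAt u Uᶜ x ∧ intMax μ 𝓑 v x ≤ ENNReal.ofReal η) :
    BasisLim 𝓑 x (fun B => ⨍ z in B, u z ∂μ) (u x) := by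
  intro ε hε
  obtain ⟨t, w, hw, hut, hwx⟩ := htrunc (ε / 4) (by positivity)
  set C := |t| + |u x|
  have hC : 0 ≤ C := by positivity
  have hCε : C * (ε / (4 * (C + 1))) ≤ ε / 4 := by
    rw [mul_div_assoc', div_le_div_iff₀ (by positivity) (by positivity)]
    nlinarith
  obtain ⟨v, U, -, hvU, hcU, hvx⟩ := hcont (ε / (4 * (C + 1))) (by positivity)
  obtain ⟨δ₁, hδ₁, hcδ⟩ := Metric.continuousWithinAt_iff.1 hcU (ε / 4) (by positivity)
  obtain ⟨S, hS, huS⟩ := hu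
  obtain ⟨δ₂, hδ₂, hSδ⟩ := Metric.mem_nhds_iff.1 hS
  refine ⟨min δ₁ δ₂, lt_min hδ₁ hδ₂, fun B hB hdiam => ?_⟩
  have hBδ := h𝓑.subset_ball hB hdiam
  have hxB := h𝓑.mem_of x B hB
  have hpt (z : X) (hz : z ∈ B) : |u z - u x| ≤ ε / 4 + C * |v z| + |w z| := by
    by_cases hzU : z ∈ U
    · have h1 : C ≤ C * |v z| := le_mul_of_one_le_right hC (hvU z hzU)
      linarith [abs_sub (u z) (u x), hut z, le_abs_self t]
    · have h1 := hcδ hzU ((mem_ball.1 (hBδ hz)).trans_le (min_le_left _ _))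
      rw [Real.dist_eq] at h1
      linarith [mul_nonneg hC (abs_nonneg (v z)), abs_nonneg (w z)]
  have hbound := enorm_setAverage_sub_le_of_forall_le (h𝓑.measurableSet x B hB)
    (h𝓑.pos x B hB).ne' ((measure_mono hBδ).trans_lt (hfin _ (lt_min hδ₁ hδ₂))).ne
    (huS.mono_set (hBδ.trans ((ball_subset_ball (min_le_right _ _)).trans hSδ))) hw hC hpt
  replace hbound : ‖(⨍ z in B, u z ∂μ) - u x‖ₑ ≤ ENNReal.ofReal (3 * ε / 4) :=
    calc _ ≤ _ := hbound
      _ ≤ ENNReal.ofReal (ε / 4) + ENNReal.ofReal C * ENNReal.ofReal (ε / (4 * (C + 1)))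
            + ENNReal.ofReal (ε / 4) := by
          gcongr
          · exact (setLAverage_le_intMax hB hxB v).trans hvx
          · exact (setLAverage_le_intMax hB hxB w).trans hwx
      _ = ENNReal.ofReal (ε / 4 + C * (ε / (4 * (C + 1))) + ε / 4) := by
          rw [← ENNReal.ofReal_mul hC, ← ENNReal.ofReal_add (by positivity) (by positivity),
            ← ENNReal.ofReal_add (by positivity) (by positivity)]
      _ ≤ ENNReal.ofReal (3 * ε / 4) := ENNReal.ofReal_le_ofReal (by linarith)
  rw [Real.enorm_eq_ofReal_abs, ENNReal.ofReal_le_ofReal_iff (by positivity)] at hbound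
  exact hbound.trans_lt (by linarith)

end Differentiation

section CapacitaryMaximal

variable {X : Type*} [MetricSpace X] [MeasurableSpace X] {μ : Measure X}
  {𝓑 : X → Set (Set X)} {s p : ℝ} {u : X → ℝ}

/-- Claim (1) of the theorem. -/
def MaximalCapacityVanishing (μ : Measure X) (𝓑 : X → Set (Set X)) (s p : ℝ) : Prop :=
  ∀ u : X → ℝ, MemHaj μ s p u →
    Tendsto (fun lam : ℝ => hCap μ s p {x | ENNReal.ofReal lam < intMax μ 𝓑 u x}) atTop (𝓝 0)

/-- Claim (2) of the theorem. -/
def MaximalCapacityContinuous (μ : Measure X) (𝓑 : X → Set (Set X)) (s p : ℝ) : Prop :=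
  ∀ lam : ℝ, 0 < lam → ∀ uk : ℕ → X → ℝ, (∀ k, MemHaj μ s p (uk k)) →
    Tendsto (fun k => hajNorm μ s p (uk k)) atTop (𝓝 0) →
    Tendsto (fun k => hCap μ s p {x | ENNReal.ofReal lam < intMax μ 𝓑 (uk k) x}) atTop (𝓝 0)

theorem MaximalCapacityVanishing.maximalCapacityContinuous
    (H : MaximalCapacityVanishing μ 𝓑 s p) (hp : 1 ≤ p) : MaximalCapacityContinuous μ 𝓑 s p := by
  intro lam hlam uk huk hlim
  have hp0 : 0 < p := zero_lt_one.trans_le hp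
  rw [ENNReal.tendsto_nhds_zero]
  by_contra! ⟨ε, hε, hfreq⟩
  have hweight (j : ℕ) : ‖((j : ℝ) + 1)‖ₑ = ENNReal.ofReal ((j : ℝ) + 1) := by
    rw [Real.enorm_eq_ofReal_abs, abs_of_pos (by positivity)]
  have hsmall (j : ℕ) : 0 < (2⁻¹ : ℝ≥0∞) ^ j / ENNReal.ofReal ((j : ℝ) + 1) :=
    ENNReal.div_pos (by simp) ENNReal.ofReal_ne_top
  choose K hKcap hKnorm using fun j =>
    (hfreq.and_eventually (hlim.eventually_lt_const (hsmall j))).exists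
  set a : ℕ → X → ℝ := fun j x => ((j : ℝ) + 1) * uk (K j) x
  have ha : ∀ j, Measurable (a j) := fun j => measurable_const.mul (huk (K j)).1
  have ha_norm (j : ℕ) : hajNorm μ s p (a j) < 2⁻¹ ^ j :=
    calc hajNorm μ s p (a j) ≤ ‖((j : ℝ) + 1)‖ₑ * hajNorm μ s p (uk (K j)) :=
          hajNorm_const_mul_le hp0 _
      _ < 2⁻¹ ^ j := by
          rw [hweight, mul_comm]
          exact ENNReal.mul_lt_of_lt_div (hKnorm j)
  have hsum : ∑' j : ℕ, (2⁻¹ : ℝ≥0∞) ^ j ≠ ⊤ := by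
    rw [ENNReal.tsum_geometric_two]
    exact ENNReal.ofNat_ne_top
  have hΦ : MemHaj μ s p (tsumAbs a) :=
    ⟨measurable_tsumAbs ha, (hajNorm_tsumAbs_le hp ha ha_norm).trans_lt hsum.lt_top⟩
  have hdom := ae_abs_le_tsumAbs hp ha ha_norm hsum
  have hsub (j : ℕ) : {x | ENNReal.ofReal lam < intMax μ 𝓑 (uk (K j)) x}
      ⊆ {x | ENNReal.ofReal (((j : ℝ) + 1) * lam) < intMax μ 𝓑 (tsumAbs a) x} := fun x hx =>
    calc ENNReal.ofReal (((j : ℝ) + 1) * lam)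
        = ‖((j : ℝ) + 1)‖ₑ * ENNReal.ofReal lam := by
          rw [hweight, ENNReal.ofReal_mul (by positivity)]
      _ < ‖((j : ℝ) + 1)‖ₑ * intMax μ 𝓑 (uk (K j)) x :=
          ENNReal.mul_lt_mul_right (by rw [hweight]; positivity) enorm_ne_top hx
      _ = intMax μ 𝓑 (a j) x := (intMax_const_mul _ _ _).symm
      _ ≤ intMax μ 𝓑 (tsumAbs a) x :=
          intMax_mono_ae (hdom.mono fun z hz => (hz j).trans (le_abs_self _)) x
  have hlevels : Tendsto (fun j : ℕ => ((j : ℝ) + 1) * lam) atTop atTop :=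
    (tendsto_atTop_add_const_right _ 1 tendsto_natCast_atTop_atTop).atTop_mul_const hlam
  obtain ⟨j, hj⟩ := (((H _ hΦ).comp hlevels).eventually_lt_const hε).exists
  exact (hKcap j).not_ge ((hCap_mono (hsub j)).trans hj.le)

theorem QuasiCont.exists_admissible (hqc : QuasiCont μ s p u) (hp : 0 < p) {ε : ℝ≥0∞}
    (hε : 0 < ε) (hε' : ε ≠ ⊤) :
    ∃ v U, MemHaj μ s p v ∧ IsOpen U ∧ (∀ x ∈ U, 1 ≤ v x) ∧ hajNorm μ s p v < ε ∧
      ContinuousOn u Uᶜ := by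
  have hεp : ε ^ p ≠ ⊤ := ENNReal.rpow_ne_top_of_nonneg hp.le hε'
  obtain ⟨F, hF, hcont⟩ := hqc _ (ENNReal.toReal_pos (ENNReal.rpow_pos hε hε').ne' hεp)
  rw [ENNReal.ofReal_toReal hεp] at hF
  obtain ⟨v, U, hv, hU, hFU, hvU, hvε⟩ := exists_admissible_of_hCap_lt hF
  exact ⟨v, U, hv, hU, hvU, (ENNReal.rpow_lt_rpow_iff hp).1 hvε,
    hcont.mono (compl_subset_compl.2 hFU)⟩

theorem MaximalCapacityContinuous.exists_hCap_eq_zero_intMax_lt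
    (H : MaximalCapacityContinuous μ 𝓑 s p) (hp : 1 ≤ p) {h : ℕ → X → ℝ}
    (hh : ∀ k, MemHaj μ s p (h k)) (hlim : Tendsto (fun k => hajNorm μ s p (h k)) atTop (𝓝 0)) :
    ∃ E, hCap μ s p E = 0 ∧
      ∀ x ∉ E, ∀ η : ℝ, 0 < η → ∃ k, intMax μ 𝓑 (h k) x < ENNReal.ofReal η := by
  have hthr (q m : ℕ) : ∃ k,
      hCap μ s p {x | ENNReal.ofReal (1 / ((q : ℝ) + 1)) < intMax μ 𝓑 (h k) x}
        < ((2⁻¹ : ℝ≥0∞) ^ (q + m)) ^ p :=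
    ((H _ (by positivity) h hh hlim).eventually_lt_const (ENNReal.rpow_pos
      (ENNReal.pow_pos (by norm_num) _) (ENNReal.pow_ne_top (by norm_num)))).exists
  choose k hk using hthr
  refine ⟨⋂ m : ℕ, ⋃ q : ℕ, {x | ENNReal.ofReal (1 / ((q : ℝ) + 1)) < intMax μ 𝓑 (h (k q m)) x},
    hCap_iInter_iUnion_eq_zero hp fun m q => hk q m, fun x hx η hη => ?_⟩
  simp only [mem_iInter, mem_iUnion, not_forall, not_exists] at hx
  obtain ⟨m, hm⟩ := hx
  obtain ⟨q, hq⟩ := exists_nat_one_div_lt hη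
  exact ⟨k q m, (not_lt.1 (hm q)).trans_lt ((ENNReal.ofReal_lt_ofReal_iff hη).2 hq)⟩

theorem MaximalCapacityContinuous.exists_hCap_eq_zero_basisLim
    (H : MaximalCapacityContinuous μ 𝓑 s p) (h𝓑 : IsDiffBasis μ 𝓑)
    (hfin : ∀ x (r : ℝ), 0 < r → μ (ball x r) < ⊤) (hp : 1 ≤ p) (hu : MemHaj μ s p u)
    (hloc : LocallyIntegrable u μ) (hqc : QuasiCont μ s p u) :
    ∃ E, hCap μ s p E = 0 ∧ ∀ x ∉ E, BasisLim 𝓑 x (fun B => ⨍ z in B, u z ∂μ) (u x) := by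
  have hp0 : 0 < p := zero_lt_one.trans_le hp
  obtain ⟨w, hw, hw_lim, huw⟩ := hu.exists_truncation hp
  choose v U hv hU hvU hv_lt hcont using fun n : ℕ =>
    hqc.exists_admissible hp0 (ENNReal.pow_pos (by simp : (0 : ℝ≥0∞) < 2⁻¹) n)
      (ENNReal.pow_ne_top (by simp))
  have hv_lim : Tendsto (fun k => hajNorm μ s p (v k)) atTop (𝓝 0) :=
    tendsto_of_tendsto_of_tendsto_of_le_of_le tendsto_const_nhds
      (ENNReal.tendsto_pow_atTop_nhds_zero_of_lt_one (by norm_num)) (fun _ => zero_le)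
      fun k => (hv_lt k).le
  set h : ℕ → X → ℝ := fun k x => |v k x| + |w k x|
  have hvh (k : ℕ) (z : X) : |v k z| ≤ |h k z| :=
    (le_add_of_nonneg_right (abs_nonneg _)).trans (le_abs_self _)
  have hwh (k : ℕ) (z : X) : |w k z| ≤ |h k z| :=
    (le_add_of_nonneg_left (abs_nonneg _)).trans (le_abs_self _)
  have hh_le (k : ℕ) : hajNorm μ s p (h k) ≤ hajNorm μ s p (v k) + hajNorm μ s p (w k) :=
    hajNorm_abs_add_abs_le hp (hv k).1 (hw k).1
  have hh (k : ℕ) : MemHaj μ s p (h k) :=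
    ⟨(hv k).1.abs.add (hw k).1.abs, (hh_le k).trans_lt (ENNReal.add_lt_top.2 ⟨(hv k).2, (hw k).2⟩)⟩
  have hh_lim : Tendsto (fun k => hajNorm μ s p (h k)) atTop (𝓝 0) := by
    have hsum := hv_lim.add hw_lim
    rw [add_zero] at hsum
    exact tendsto_of_tendsto_of_tendsto_of_le_of_le tendsto_const_nhds hsum (fun _ => zero_le) hh_le
  obtain ⟨E, hE, hEx⟩ := H.exists_hCap_eq_zero_intMax_lt hp hh hh_lim
  refine ⟨E, hE, fun x hx => basisLim_setAverage h𝓑 (hfin x) (hloc x) (fun η hη => ?_)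
    (fun η hη => ?_)⟩
  · obtain ⟨k, hk⟩ := hEx x hx η hη
    exact ⟨k, w k, (hw k).1, huw k, (intMax_mono_ae (ae_of_all _ (hwh k)) x).trans hk.le⟩
  · obtain ⟨k, hk⟩ := hEx x hx (min η 1) (lt_min hη one_pos)
    have hxU : x ∉ U k := fun hxU =>
      (hk.trans_le (ENNReal.ofReal_le_one.2 (min_le_right _ _))).not_ge
        (one_le_intMax h𝓑 (hfin x) (hU k) hxU fun z hz =>
          ((hvU k z hz).trans (le_abs_self _)).trans (hvh k z))
    refine ⟨v k, U k, (hv k).1, fun z hz => (hvU k z hz).trans (le_abs_self _),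
      hcont k x hxU, (intMax_mono_ae (ae_of_all _ (hvh k)) x).trans ?_⟩
    exact hk.le.trans (ENNReal.ofReal_le_ofReal (min_le_left _ _))

end CapacitaryMaximal

theorem stmt19_general {X : Type*} [MetricSpace X] [MeasurableSpace X]
    (μ : Measure X)
    (hball : ∀ (x : X) (r : ℝ), 0 < r → 0 < μ (ball x r) ∧ μ (ball x r) < ⊤)
    (𝓑 : X → Set (Set X)) (h𝓑 : IsBFBasis μ 𝓑)
    (s p : ℝ) (hp : 1 < p)
    (hloc : ∀ u : X → ℝ, MemHaj μ s p u → LocallyIntegrable u μ) :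
    ((∀ u : X → ℝ, MemHaj μ s p u →
        Tendsto (fun lam : ℝ => hCap μ s p {x | ENNReal.ofReal lam < intMax μ 𝓑 u x})
          atTop (𝓝 0)) →
      (∀ lam : ℝ, 0 < lam → ∀ uk : ℕ → X → ℝ, (∀ k, MemHaj μ s p (uk k)) →
        Tendsto (fun k => hajNorm μ s p (uk k)) atTop (𝓝 0) →
        Tendsto (fun k => hCap μ s p {x | ENNReal.ofReal lam < intMax μ 𝓑 (uk k) x})
          atTop (𝓝 0))) ∧
    ((∀ lam : ℝ, 0 < lam → ∀ uk : ℕ → X → ℝ, (∀ k, MemHaj μ s p (uk k)) →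
        Tendsto (fun k => hajNorm μ s p (uk k)) atTop (𝓝 0) →
        Tendsto (fun k => hCap μ s p {x | ENNReal.ofReal lam < intMax μ 𝓑 (uk k) x})
          atTop (𝓝 0)) →
      (∀ u : X → ℝ, MemHaj μ s p u → QuasiCont μ s p u →
        ∃ E : Set X, hCap μ s p E = 0 ∧ ∀ x ∉ E,
          BasisLim 𝓑 x (fun B => ⨍ z in B, u z ∂μ) (u x))) :=
  ⟨fun h1 => MaximalCapacityVanishing.maximalCapacityContinuous h1 hp.le,
    fun h2 u hu hqc => MaximalCapacityContinuous.exists_hCap_eq_zero_basisLim h2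
      h𝓑.toIsDiffBasis (fun x r hr => (hball x r hr).2) hp.le hu (hloc u hu) hqc⟩

/-- for a Busemann–Feller basis on a separable space and `1 < p < ∞`,
assuming Hajłasz functions are locally integrable: (1) ⇒ (2) and (2) ⇒ (3), for the
capacitary conditions on the maximal function and differentiation of integral averages. -/
theorem stmt19 {X : Type*} [MetricSpace X] [MeasurableSpace X] [BorelSpace X]
    [TopologicalSpace.SeparableSpace X]
    (μ : Measure X)
    (hball : ∀ (x : X) (r : ℝ), 0 < r → 0 < μ (ball x r) ∧ μ (ball x r) < ⊤)
    (𝓑 : X → Set (Set X)) (h𝓑 : IsBFBasis μ 𝓑)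
    (s p : ℝ) (hs0 : 0 < s) (hs1 : s ≤ 1) (hp : 1 < p)
    (hloc : ∀ u : X → ℝ, MemHaj μ s p u → LocallyIntegrable u μ) :
    ((∀ u : X → ℝ, MemHaj μ s p u →
        Tendsto (fun lam : ℝ => hCap μ s p {x | ENNReal.ofReal lam < intMax μ 𝓑 u x})
          atTop (𝓝 0)) →
      (∀ lam : ℝ, 0 < lam → ∀ uk : ℕ → X → ℝ, (∀ k, MemHaj μ s p (uk k)) →
        Tendsto (fun k => hajNorm μ s p (uk k)) atTop (𝓝 0) →
        Tendsto (fun k => hCap μ s p {x | ENNReal.ofReal lam < intMax μ 𝓑 (uk k) x})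
          atTop (𝓝 0))) ∧
    ((∀ lam : ℝ, 0 < lam → ∀ uk : ℕ → X → ℝ, (∀ k, MemHaj μ s p (uk k)) →
        Tendsto (fun k => hajNorm μ s p (uk k)) atTop (𝓝 0) →
        Tendsto (fun k => hCap μ s p {x | ENNReal.ofReal lam < intMax μ 𝓑 (uk k) x})
          atTop (𝓝 0)) →
      (∀ u : X → ℝ, MemHaj μ s p u → QuasiCont μ s p u →
        ∃ E : Set X, hCap μ s p E = 0 ∧ ∀ x ∉ E,
          BasisLim 𝓑 x (fun B => ⨍ z in B, u z ∂μ) (u x))) :=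
  stmt19_general μ hball 𝓑 h𝓑 s p hp hloc
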